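/- arXiv:1704.05191 — 6 statements merged into one kernel-verified Lean document; each statement's English description precedes it below -/
import Mathlib

section
/- For every positive integer t, the number p_t(n) of partitions of n whose largest part minus smallest part is at most t has generating function ∑_{n≥1} p_t(n) q^n = (1/(1−q^t)) · (1/((q;q)_t) − 1), where (q;q)_t = ∏_{k=1}^{t} (1−q^k). -/
/-!
Split the partitions of `n` with spread at most `t` according to whether the largest part exceeds
`t`. Those whose parts are all `≤ t` are the nonempty partitions into parts `≤ t`, counted by
`1 / (q;q)_t - 1`. Those whose largest part `M` exceeds `t` correspond bijectively to the partitions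
of `n - t` with spread at most `t`: replace one copy of `M` by `M - t`, which is then a smallest
part; the inverse replaces one copy of the smallest part `m` by `m + t`, which is then a largest
part. Hence `(1 - q^t) ∑ p_t(n) q^n = 1 / (q;q)_t - 1`.
-/

open PowerSeries Finset
open scoped PowerSeries.WithPiTopology

namespace Multiset

lemma sup_eq_of_mem {α : Type*} [SemilatticeSup α] [OrderBot α] {s : Multiset α} {a : α}
    (ha : a ∈ s) (h : ∀ b ∈ s, b ≤ a) : s.sup = a :=
  le_antisymm (sup_le.2 h) (le_sup ha)

lemma sup_mem_of_ne_zero {α : Type*} [LinearOrder α] [OrderBot α] {s : Multiset α}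
    (hs : s ≠ 0) : s.sup ∈ s := by
  obtain ⟨a, ha, hmax⟩ := exists_max_image id hs
  rwa [sup_eq_of_mem ha hmax]

end Multiset

lemma Nat.Partition.powerSeriesMk_card_restricted_le_mul_prod {R : Type*} [CommRing R] (t : ℕ) :
    (PowerSeries.mk fun n ↦ (#(restricted n (· ≤ t)) : R)) *
      ∏ k ∈ range t, (1 - X ^ (k + 1)) = 1 := by
  let _ : TopologicalSpace R := ⊥
  have _ : DiscreteTopology R := ⟨rfl⟩
  have hprod := hasProd_powerSeriesMk_card_restricted R (· ≤ t)
  rw [hprod.unique <| hasProd_prod_of_ne_finset_one (s := range t) fun i hi ↦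
    if_neg (by simpa using hi), ← prod_mul_distrib]
  refine prod_eq_one fun i hi ↦ ?_
  rw [if_pos (by simpa using hi)]
  simp_rw [pow_mul]
  exact WithPiTopology.tsum_pow_mul_one_sub_of_constantCoeff_eq_zero (by simp)

namespace SpreadPartition

noncomputable def minPart (s : Multiset ℕ) : ℕ := sInf {p | p ∈ s}

lemma minPart_mem {s : Multiset ℕ} (hs : s ≠ 0) : minPart s ∈ s :=
  Nat.sInf_mem (Multiset.exists_mem_of_ne_zero hs)

lemma minPart_le {s : Multiset ℕ} {p : ℕ} (hp : p ∈ s) : minPart s ≤ p :=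
  Nat.sInf_le hp

lemma minPart_eq_of_mem {s : Multiset ℕ} {a : ℕ} (ha : a ∈ s) (h : ∀ p ∈ s, a ≤ p) :
    minPart s = a :=
  IsLeast.csInf_eq ⟨ha, h⟩

noncomputable def raise (t : ℕ) (s : Multiset ℕ) : Multiset ℕ :=
  (minPart s + t) ::ₘ s.erase (minPart s)

def lower (t : ℕ) (s : Multiset ℕ) : Multiset ℕ :=
  (s.sup - t) ::ₘ s.erase s.sup

variable {t : ℕ} {s : Multiset ℕ}

lemma mem_Icc_of_mem_raise (hst : s.sup ≤ minPart s + t) {p : ℕ} (hp : p ∈ raise t s) :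
    p ∈ Set.Icc (minPart s) (minPart s + t) := by
  rcases Multiset.mem_cons.1 hp with rfl | hp
  · exact ⟨le_self_add, le_rfl⟩
  · have hp := Multiset.mem_of_mem_erase hp
    exact ⟨minPart_le hp, (Multiset.le_sup hp).trans hst⟩

lemma mem_Icc_of_mem_lower (hst : s.sup ≤ minPart s + t) {p : ℕ} (hp : p ∈ lower t s) :
    p ∈ Set.Icc (s.sup - t) s.sup := by
  rcases Multiset.mem_cons.1 hp with rfl | hp
  · exact ⟨le_rfl, tsub_le_self⟩
  · have hp := Multiset.mem_of_mem_erase hp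
    exact ⟨tsub_le_iff_right.2 (hst.trans (Nat.add_le_add_right (minPart_le hp) t)),
      Multiset.le_sup hp⟩

lemma sup_raise (hst : s.sup ≤ minPart s + t) : (raise t s).sup = minPart s + t :=
  Multiset.sup_eq_of_mem (Multiset.mem_cons_self _ _) fun _ hp ↦ (mem_Icc_of_mem_raise hst hp).2

lemma minPart_lower (hst : s.sup ≤ minPart s + t) : minPart (lower t s) = s.sup - t :=
  minPart_eq_of_mem (Multiset.mem_cons_self _ _) fun _ hp ↦ (mem_Icc_of_mem_lower hst hp).1

lemma minPart_le_minPart_raise (hst : s.sup ≤ minPart s + t) :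
    minPart s ≤ minPart (raise t s) :=
  (mem_Icc_of_mem_raise hst (minPart_mem Multiset.cons_ne_zero)).1

lemma sup_lower_le (hst : s.sup ≤ minPart s + t) : (lower t s).sup ≤ s.sup :=
  Multiset.sup_le.2 fun _ hp ↦ (mem_Icc_of_mem_lower hst hp).2

lemma sum_raise (hs : s ≠ 0) : (raise t s).sum = s.sum + t := by
  rw [raise, Multiset.sum_cons, ← Multiset.sum_erase (minPart_mem hs), add_right_comm]

lemma sum_lower (hs : s ≠ 0) (hts : t ≤ s.sup) : (lower t s).sum + t = s.sum := by
  rw [lower, Multiset.sum_cons, ← Multiset.sum_erase (Multiset.sup_mem_of_ne_zero hs)]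
  omega

lemma lower_raise (hs : s ≠ 0) (hst : s.sup ≤ minPart s + t) : lower t (raise t s) = s := by
  rw [lower, sup_raise hst, raise, Multiset.erase_cons_head, add_tsub_cancel_right,
    Multiset.cons_erase (minPart_mem hs)]

lemma raise_lower (hs : s ≠ 0) (hst : s.sup ≤ minPart s + t) (hts : t ≤ s.sup) :
    raise t (lower t s) = s := by
  rw [raise, minPart_lower hst, lower, Multiset.erase_cons_head, tsub_add_cancel_of_le hts,
    Multiset.cons_erase (Multiset.sup_mem_of_ne_zero hs)]

def spreadLE (t n : ℕ) : Set (Multiset ℕ) :=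
  {s | (∀ p ∈ s, 0 < p) ∧ s ≠ 0 ∧ s.sum = n ∧ s.sup - minPart s ≤ t}

variable {t n m : ℕ}

lemma finite_spreadLE : (spreadLE t n).Finite :=
  (Set.finite_range fun p : n.Partition ↦ p.parts).subset fun s hs ↦
    ⟨⟨s, hs.1 _, hs.2.2.1⟩, rfl⟩

lemma spreadLE_zero : spreadLE t 0 = ∅ :=
  Set.eq_empty_of_forall_notMem fun s ⟨hpos, hs, hsum, _⟩ ↦ by
    obtain ⟨p, hp⟩ := Multiset.exists_mem_of_ne_zero hs
    exact (hpos p hp).ne' (Multiset.sum_eq_zero_iff.1 hsum p hp)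

lemma raise_mem_spreadLE (hs : s ∈ spreadLE t n) :
    raise t s ∈ spreadLE t (n + t) \ {s | s.sup ≤ t} := by
  obtain ⟨hpos, hne, hsum, hspread⟩ := hs
  have hst := tsub_le_iff_left.1 hspread
  have hmin := hpos _ (minPart_mem hne)
  refine ⟨⟨fun p hp ↦ hmin.trans_le (mem_Icc_of_mem_raise hst hp).1, Multiset.cons_ne_zero,
    by rw [sum_raise hne, hsum], ?_⟩, ?_⟩
  · rw [sup_raise hst, tsub_le_iff_left]
    exact Nat.add_le_add_right (minPart_le_minPart_raise hst) t
  · show ¬(raise t s).sup ≤ t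
    rw [sup_raise hst]
    omega

lemma lower_mem_spreadLE (hs : s ∈ spreadLE t (n + t) \ {s | s.sup ≤ t}) :
    lower t s ∈ spreadLE t n := by
  obtain ⟨⟨hpos, hne, hsum, hspread⟩, hts⟩ := hs
  have hst := tsub_le_iff_left.1 hspread
  have hts : t < s.sup := not_le.1 hts
  refine ⟨fun p hp ↦ ?_, Multiset.cons_ne_zero, ?_, ?_⟩
  · have := (mem_Icc_of_mem_lower hst hp).1
    omega
  · have := sum_lower hne hts.le
    omega
  · rw [minPart_lower hst]
    have := sup_lower_le hst
    omega

lemma bijOn_raise_spreadLE :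
    Set.BijOn (raise t) (spreadLE t n) (spreadLE t (n + t) \ {s | s.sup ≤ t}) :=
  Set.InvOn.bijOn
    ⟨fun _ hs ↦ lower_raise hs.2.1 (tsub_le_iff_left.1 hs.2.2.2),
      fun _ hs ↦ raise_lower hs.1.2.1 (tsub_le_iff_left.1 hs.1.2.2.2) (not_le.1 hs.2).le⟩
    (fun _ ↦ raise_mem_spreadLE) (fun _ ↦ lower_mem_spreadLE)

lemma spreadLE_sdiff_eq_empty (hm : m < t) : spreadLE t m \ {s | s.sup ≤ t} = ∅ :=
  Set.eq_empty_of_forall_notMem fun _ ⟨⟨_, _, hsum, _⟩, hts⟩ ↦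
    hts <| Multiset.sup_le.2 fun _ hp ↦ ((Multiset.le_sum_of_mem hp).trans hsum.le).trans hm.le

lemma spreadLE_inter_eq_image_restricted (hm : m ≠ 0) :
    spreadLE t m ∩ {s | s.sup ≤ t} =
      Nat.Partition.parts '' (Nat.Partition.restricted m (· ≤ t) : Set m.Partition) := by
  ext s
  simp only [Set.mem_inter_iff, Set.mem_image, Finset.mem_coe, Nat.Partition.restricted,
    Finset.mem_filter, Finset.mem_univ, true_and]
  constructor
  · rintro ⟨⟨hpos, -, hsum, -⟩, hts⟩
    exact ⟨⟨s, hpos _, hsum⟩, fun p hp ↦ (Multiset.le_sup hp).trans hts, rfl⟩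
  · rintro ⟨p, hpt, rfl⟩
    have hts : p.parts.sup ≤ t := Multiset.sup_le.2 hpt
    have hne : p.parts ≠ 0 := fun h ↦ hm (by rw [← p.parts_sum, h, Multiset.sum_zero])
    exact ⟨⟨fun _ ↦ p.parts_pos, hne, p.parts_sum, tsub_le_self.trans hts⟩, hts⟩

variable {R : Type*} [CommRing R]

lemma coeff_X_pow_mul_genFun_spreadLE :
    coeff m (X ^ t * PowerSeries.mk fun n ↦ ((spreadLE t n).ncard : R)) =
      ((spreadLE t m \ {s | s.sup ≤ t}).ncard : R) := by
  rw [coeff_X_pow_mul', coeff_mk]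
  split_ifs with htm
  · obtain ⟨n, rfl⟩ := Nat.exists_eq_add_of_le' htm
    rw [Nat.add_sub_cancel, bijOn_raise_spreadLE.ncard_eq]
  · rw [spreadLE_sdiff_eq_empty (not_le.1 htm), Set.ncard_empty, Nat.cast_zero]

lemma coeff_genFun_restricted_sub_one :
    coeff m ((PowerSeries.mk fun n ↦ (#(Nat.Partition.restricted n (· ≤ t)) : R)) - 1) =
      ((spreadLE t m ∩ {s | s.sup ≤ t}).ncard : R) := by
  rcases eq_or_ne m 0 with rfl | hm
  · simp [spreadLE_zero, Nat.Partition.restricted]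
  · rw [map_sub, coeff_mk, coeff_one, if_neg hm, sub_zero, spreadLE_inter_eq_image_restricted hm,
      Set.ncard_image_of_injective _ fun _ _ ↦ Nat.Partition.ext, Set.ncard_coe_finset]

lemma one_sub_X_pow_mul_genFun_spreadLE :
    (1 - X ^ t) * (PowerSeries.mk fun n ↦ ((spreadLE t n).ncard : R)) =
      (PowerSeries.mk fun n ↦ (#(Nat.Partition.restricted n (· ≤ t)) : R)) - 1 := by
  ext m
  rw [sub_mul, one_mul, map_sub, coeff_X_pow_mul_genFun_spreadLE, coeff_genFun_restricted_sub_one,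
    coeff_mk, sub_eq_iff_eq_add, ← Nat.cast_add,
    Set.ncard_inter_add_ncard_sdiff_eq_ncard _ _ finite_spreadLE]

end SpreadPartition

theorem breuer_kronholm_gen_fun (t : ℕ) (ht : 0 < t) :
    (PowerSeries.mk fun n =>
        (Nat.card {lam : Multiset ℕ // (∀ p ∈ lam, 0 < p) ∧ lam ≠ 0 ∧
          lam.sum = n ∧ lam.sup - sInf {p | p ∈ lam} ≤ t} : ℚ)) =
      (1 - PowerSeries.X ^ t)⁻¹ *
        ((∏ k ∈ Finset.range t, (1 - PowerSeries.X ^ (k + 1) : PowerSeries ℚ))⁻¹ - 1) := by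
  change (PowerSeries.mk fun n ↦ ((SpreadPartition.spreadLE t n).ncard : ℚ)) = _
  have hprod : constantCoeff (∏ k ∈ range t, (1 - X ^ (k + 1) : ℚ⟦X⟧)) ≠ 0 := by
    simp [map_prod]
  have hX : constantCoeff (1 - X ^ t : ℚ⟦X⟧) ≠ 0 := by
    simp [zero_pow ht.ne']
  rw [(inv_eq_iff_mul_eq_one hprod).2 (Nat.Partition.powerSeriesMk_card_restricted_le_mul_prod t),
    mul_comm, eq_mul_inv_iff_mul_eq hX, mul_comm,
    SpreadPartition.one_sub_X_pow_mul_genFun_spreadLE]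
end

section
/- For every positive integer t, the number g_t(n) of overpartitions of n with difference between largest and smallest parts at most t, and the largest part not overlined when that difference equals t, satisfies ∑_{n≥1} g_t(n) q^n = (1/(1−q^t)) · ((−q;q)_t/(q;q)_t − 1). -/
/-- An overpartition: a multiset of parts together with the finite set of
overlined part sizes. -/
abbrev OP : Type := Multiset ℕ × Finset ℕ

/-- Validity: all parts positive, and every overlined size actually occurs as a part
(so at most one part of each size is overlined). -/
def OP.IsValid (π : OP) : Prop := (∀ p ∈ π.1, 0 < p) ∧ ∀ p ∈ π.2, p ∈ π.1

/-- The weight (sum of parts). -/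
def OP.wt (π : OP) : ℕ := π.1.sum

/-- The number of parts. -/
def OP.len (π : OP) : ℕ := Multiset.card π.1

/-- The number of overlined parts. -/
def OP.o (π : OP) : ℕ := π.2.card

/-- The largest part. -/
def OP.maxPart (π : OP) : ℕ := π.1.sup

/-- The smallest part. -/
noncomputable def OP.minPart (π : OP) : ℕ := sInf {p | p ∈ π.1}

/-- The number of parts equal to `t`. -/
def OP.mT (t : ℕ) (π : OP) : ℕ := π.1.count t

/-- Membership in `G_t`: nonempty, valid, largest minus smallest part at most `t`,
and the largest part not overlined when this difference is exactly `t`. -/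
def InG (t : ℕ) (π : OP) : Prop :=
  π.IsValid ∧ π.1 ≠ 0 ∧ π.maxPart - π.minPart ≤ t ∧
    (π.maxPart - π.minPart = t → π.maxPart ∉ π.2)

/-- Membership in `P_t`: nonempty, valid, all parts at most `t`, no part `t` overlined. -/
def InP (t : ℕ) (π : OP) : Prop :=
  π.IsValid ∧ π.1 ≠ 0 ∧ (∀ p ∈ π.1, p ≤ t) ∧ t ∉ π.2

/-- The map `φ`: each part is replaced by its residue mod `t` (deleted if zero,
retaining its overline) together with `⌊part/t⌋` non-overlined copies of `t`. -/
def phi (t : ℕ) (π : OP) : OP :=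
  (Multiset.replicate (π.1.map (· / t)).sum t + (π.1.map (· % t)).filter (· ≠ 0),
   (π.2.image (· % t)).erase 0)

/-- Membership in `B_t`: bipartitions whose first component has all parts equal to `t`
(none overlined) and whose second component is a nonempty overpartition with parts `≤ t`. -/
def InB (t : ℕ) (b : Multiset ℕ × OP) : Prop :=
  (∀ a ∈ b.1, a = t) ∧ b.2.IsValid ∧ b.2.1 ≠ 0 ∧ ∀ p ∈ b.2.1, p ≤ t

/-- The map `ψ`: merge the two components, un-overlining any overlined `t`. -/
def psi (t : ℕ) (b : Multiset ℕ × OP) : OP := (b.1 + b.2.1, b.2.2.erase t)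

/-!
Sort the overpartitions of `G_t` by their smallest part `s`. Those with smallest part `s` are
the overpartitions with parts in `[s, s + t]` and overlines in `[s, s + t)`, minus those in which
`s` does not occur. Both classes have product generating functions `∏ (1 + q^b) / ∏ (1 - q^a)`,
and after multiplication by `1 - q^t` their difference becomes `A_s - A_{s+1}`, where
`A_s = (-q^s; q)_t / (q^s; q)_t`. Summing over `s` telescopes to `A_1 - 1`.
-/

open PowerSeries

namespace OP

theorem finite_setOf_isValid_wt (n : ℕ) : {π : OP | π.IsValid ∧ π.wt = n}.Finite := by
  refine ((Set.finite_range fun p : n.Partition => p.parts).prod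
    (Finset.range (n + 1)).powerset.finite_toSet).subset ?_
  rintro π ⟨hv, hwt⟩
  have hle : ∀ p ∈ π.1, p ≤ n := fun p hp => hwt ▸ Multiset.le_sum_of_mem hp
  refine ⟨⟨⟨π.1, hv.1 _, hwt⟩, rfl⟩, ?_⟩
  simp only [Finset.coe_powerset, Set.mem_preimage, Set.mem_powerset_iff, Finset.coe_subset]
  exact fun p hp => Finset.mem_range_succ_iff.2 (hle p (hv.2 p hp))

noncomputable def genFun (S : OP → Prop) : ℚ⟦X⟧ :=
  PowerSeries.mk fun n => (Nat.card {π : OP // S π ∧ π.wt = n} : ℚ)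

theorem genFun_eq_add {S S₁ S₂ : OP → Prop} (hS : ∀ π, S π → π.IsValid)
    (h : ∀ π, S π ↔ S₁ π ∨ S₂ π) (hdisj : ∀ π, S₁ π → ¬ S₂ π) :
    genFun S = genFun S₁ + genFun S₂ := by
  ext n
  simp only [genFun, coeff_mk, map_add, ← Nat.cast_add]
  have hfin : {π | S π ∧ π.wt = n}.Finite :=
    (finite_setOf_isValid_wt n).subset fun π hπ => ⟨hS π hπ.1, hπ.2⟩
  have hunion : {π | S π ∧ π.wt = n} = {π | S₁ π ∧ π.wt = n} ∪ {π | S₂ π ∧ π.wt = n} := by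
    ext π
    simp only [Set.mem_ofPred_eq, Set.mem_union, h, or_and_right]
  rw [hunion] at hfin
  congr 1
  change Set.ncard {π | S π ∧ π.wt = n} =
    Set.ncard {π | S₁ π ∧ π.wt = n} + Set.ncard {π | S₂ π ∧ π.wt = n}
  rw [hunion, Set.ncard_union_eq (Set.disjoint_left.2 fun π h₁ h₂ => hdisj π h₁.1 h₂.1)
    (hfin.subset Set.subset_union_left) (hfin.subset Set.subset_union_right)]

theorem genFun_eq_X_pow_mul {S T : OP → Prop} (a : ℕ) (f g : OP → OP)
    (hf : ∀ π, S π → T (f π)) (hg : ∀ σ, T σ → S (g σ))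
    (hgf : ∀ π, S π → g (f π) = π) (hfg : ∀ σ, T σ → f (g σ) = σ)
    (hwt : ∀ σ, (g σ).wt = σ.wt + a) :
    genFun S = X ^ a * genFun T := by
  have hwt' : ∀ π, S π → (f π).wt + a = π.wt := fun π hπ => by rw [← hwt, hgf π hπ]
  ext n
  rw [coeff_X_pow_mul']
  simp only [genFun, coeff_mk]
  split_ifs with han
  · congr 1
    exact Nat.card_congr
      { toFun := fun π => ⟨f π, hf _ π.2.1, by have := hwt' _ π.2.1; omega⟩
        invFun := fun σ => ⟨g σ, hg _ σ.2.1, by rw [hwt]; omega⟩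
        left_inv := fun π => Subtype.ext (hgf _ π.2.1)
        right_inv := fun σ => Subtype.ext (hfg _ σ.2.1) }
  · have : IsEmpty {π : OP // S π ∧ π.wt = n} :=
      ⟨fun π => han (by have := hwt' _ π.2.1; omega)⟩
    simp

def IsValidIn (A B : Finset ℕ) (π : OP) : Prop :=
  π.IsValid ∧ (∀ p ∈ π.1, p ∈ A) ∧ ∀ p ∈ π.2, p ∈ B

theorem coeff_genFun_isValidIn_of_lt {A : Finset ℕ} (B : Finset ℕ) {n : ℕ}
    (hA : ∀ a ∈ A, n < a) : coeff n (genFun (IsValidIn A B)) = coeff n 1 := by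
  have hempty : ∀ π : OP, IsValidIn A B π ∧ π.wt = n → π = (0, ∅) := by
    rintro π ⟨⟨hv, hA', -⟩, hwt⟩
    have h1 : π.1 = 0 := Multiset.eq_zero_of_forall_notMem fun p hp =>
      (hA p (hA' p hp)).not_ge (hwt ▸ Multiset.le_sum_of_mem hp)
    have h2 : π.2 = ∅ := Finset.eq_empty_of_forall_notMem fun p hp => by
      simpa [h1] using hv.2 p hp
    exact Prod.ext h1 h2
  rw [genFun, coeff_mk, coeff_one]
  split_ifs with hn
  · subst hn
    have : Unique {π : OP // IsValidIn A B π ∧ π.wt = 0} :=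
      { default := ⟨(0, ∅), by simp [IsValidIn, IsValid, wt]⟩
        uniq := fun π => Subtype.ext (hempty π.1 π.2) }
    simp
  · have : IsEmpty {π : OP // IsValidIn A B π ∧ π.wt = n} :=
      ⟨fun π => hn (by rw [← π.2.2, hempty π.1 π.2]; rfl)⟩
    simp

theorem genFun_isValidIn_empty (B : Finset ℕ) : genFun (IsValidIn ∅ B) = 1 :=
  PowerSeries.ext fun _ => coeff_genFun_isValidIn_of_lt B (by simp)

variable {A B : Finset ℕ} {a : ℕ}

theorem one_sub_X_pow_mul_genFun_isValidIn_insert_left (ha0 : 0 < a) (haA : a ∉ A) (haB : a ∉ B) :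
    (1 - X ^ a) * genFun (IsValidIn (insert a A) B) = genFun (IsValidIn A B) := by
  have hsplit : genFun (IsValidIn (insert a A) B) =
      genFun (IsValidIn A B) + genFun fun π => IsValidIn (insert a A) B π ∧ a ∈ π.1 := by
    refine genFun_eq_add (fun π hπ => hπ.1) (fun π => ?_) fun π hπ ha => haA (hπ.2.1 a ha.2)
    by_cases ha : a ∈ π.1
    · simp only [ha, and_true, iff_or_self]
      exact fun hπ => absurd (hπ.2.1 a ha) haA
    · simp only [IsValidIn, Finset.mem_insert, ha, and_false, or_false]
      exact and_congr_right' (and_congr_left' (forall₂_congr fun p hp =>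
        or_iff_right (by rintro rfl; exact ha hp)))
  have hremove : (genFun fun π => IsValidIn (insert a A) B π ∧ a ∈ π.1) =
      X ^ a * genFun (IsValidIn (insert a A) B) := by
    refine genFun_eq_X_pow_mul a (fun π => (π.1.erase a, π.2)) (fun σ => (a ::ₘ σ.1, σ.2))
      ?_ ?_ ?_ ?_ fun σ => by simp [wt, add_comm]
    · rintro π ⟨⟨⟨hpos, hsub⟩, hA', hB'⟩, -⟩
      refine ⟨⟨fun p hp => hpos p (Multiset.mem_of_mem_erase hp), fun p hp => ?_⟩,
        fun p hp => hA' p (Multiset.mem_of_mem_erase hp), hB'⟩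
      exact (Multiset.mem_erase_of_ne (by rintro rfl; exact haB (hB' _ hp))).2 (hsub p hp)
    · rintro σ ⟨⟨hpos, hsub⟩, hA', hB'⟩
      refine ⟨⟨⟨fun p hp => ?_, fun p hp => Multiset.mem_cons_of_mem (hsub p hp)⟩,
        fun p hp => ?_, hB'⟩, Multiset.mem_cons_self a _⟩
      · rcases Multiset.mem_cons.1 hp with rfl | hp
        exacts [ha0, hpos p hp]
      · rcases Multiset.mem_cons.1 hp with rfl | hp
        exacts [Finset.mem_insert_self _ _, hA' p hp]
    · exact fun π hπ => Prod.ext (Multiset.cons_erase hπ.2) rfl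
    · exact fun σ _ => Prod.ext (Multiset.erase_cons_head a σ.1) rfl
  rw [← sub_eq_of_eq_add hsplit, hremove]
  ring

theorem genFun_isValidIn_insert_right (ha0 : 0 < a) (haA : a ∈ A) (haB : a ∉ B) :
    genFun (IsValidIn A (insert a B)) = (1 + X ^ a) * genFun (IsValidIn A B) := by
  have hsplit : genFun (IsValidIn A (insert a B)) =
      genFun (IsValidIn A B) + genFun fun π => IsValidIn A (insert a B) π ∧ a ∈ π.2 := by
    refine genFun_eq_add (fun π hπ => hπ.1) (fun π => ?_) fun π hπ ha => haB (hπ.2.2 a ha.2)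
    by_cases ha : a ∈ π.2
    · simp only [ha, and_true, iff_or_self]
      exact fun hπ => absurd (hπ.2.2 a ha) haB
    · simp only [IsValidIn, Finset.mem_insert, ha, and_false, or_false]
      exact and_congr_right' (and_congr_right' (forall₂_congr fun p hp =>
        or_iff_right (by rintro rfl; exact ha hp)))
  have hremove : (genFun fun π => IsValidIn A (insert a B) π ∧ a ∈ π.2) =
      X ^ a * genFun (IsValidIn A B) := by
    refine genFun_eq_X_pow_mul a (fun π => (π.1.erase a, π.2.erase a))
      (fun σ => (a ::ₘ σ.1, insert a σ.2)) ?_ ?_ ?_ ?_ fun σ => by simp [wt, add_comm]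
    · rintro π ⟨⟨⟨hpos, hsub⟩, hA', hB'⟩, -⟩
      refine ⟨⟨fun p hp => hpos p (Multiset.mem_of_mem_erase hp), fun p hp => ?_⟩,
        fun p hp => hA' p (Multiset.mem_of_mem_erase hp), fun p hp => ?_⟩
      · obtain ⟨hpa, hp⟩ := Finset.mem_erase.1 hp
        exact (Multiset.mem_erase_of_ne hpa).2 (hsub p hp)
      · obtain ⟨hpa, hp⟩ := Finset.mem_erase.1 hp
        exact (Finset.mem_insert.1 (hB' p hp)).resolve_left hpa
    · rintro σ ⟨⟨hpos, hsub⟩, hA', hB'⟩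
      refine ⟨⟨⟨fun p hp => ?_, fun p hp => ?_⟩, fun p hp => ?_, fun p hp => ?_⟩,
        Finset.mem_insert_self a _⟩
      · rcases Multiset.mem_cons.1 hp with rfl | hp
        exacts [ha0, hpos p hp]
      · rcases Finset.mem_insert.1 hp with rfl | hp
        exacts [Multiset.mem_cons_self _ _, Multiset.mem_cons_of_mem (hsub p hp)]
      · rcases Multiset.mem_cons.1 hp with rfl | hp
        exacts [haA, hA' p hp]
      · rcases Finset.mem_insert.1 hp with rfl | hp
        exacts [Finset.mem_insert_self _ _, Finset.mem_insert_of_mem (hB' p hp)]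
    · exact fun π hπ => Prod.ext (Multiset.cons_erase (hπ.1.1.2 a hπ.2))
        (Finset.insert_erase hπ.2)
    · exact fun σ hσ => Prod.ext (Multiset.erase_cons_head a σ.1)
        (Finset.erase_insert fun ha => haB (hσ.2.2 a ha))
  rw [hsplit, hremove]
  ring

theorem genFun_isValidIn_empty_right (h0 : 0 ∉ A) :
    genFun (IsValidIn A ∅) = (∏ a ∈ A, (1 - X ^ a))⁻¹ := by
  induction A using Finset.induction_on with
  | empty => simp [genFun_isValidIn_empty]
  | @insert a A haA ih =>
    have ha0 : 0 < a := Nat.pos_of_ne_zero fun h => h0 (h ▸ Finset.mem_insert_self a A)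
    have h0' : 0 ∉ A := fun h => h0 (Finset.mem_insert_of_mem h)
    have hunit : constantCoeff (1 - X ^ a : ℚ⟦X⟧) ≠ 0 := by simp [zero_pow ha0.ne']
    rw [Finset.prod_insert haA, PowerSeries.mul_inv_rev, ← ih h0',
      eq_mul_inv_iff_mul_eq hunit, mul_comm,
      one_sub_X_pow_mul_genFun_isValidIn_insert_left ha0 haA (Finset.notMem_empty a)]

theorem genFun_isValidIn (h0 : 0 ∉ A) (hBA : B ⊆ A) :
    genFun (IsValidIn A B) = (∏ b ∈ B, (1 + X ^ b)) * (∏ a ∈ A, (1 - X ^ a))⁻¹ := by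
  induction B using Finset.induction_on with
  | empty => simp [genFun_isValidIn_empty_right h0]
  | @insert b B hbB ih =>
    have hb : b ∈ A := hBA (Finset.mem_insert_self b B)
    have hb0 : 0 < b := Nat.pos_of_ne_zero fun h => h0 (h ▸ hb)
    rw [genFun_isValidIn_insert_right hb0 hb hbB,
      ih ((Finset.subset_insert b B).trans hBA), Finset.prod_insert hbB, mul_assoc]

theorem minPart_mem {π : OP} (h : π.1 ≠ 0) : π.minPart ∈ π.1 :=
  Nat.sInf_mem (Multiset.exists_mem_of_ne_zero h)

theorem minPart_le {π : OP} {p : ℕ} (hp : p ∈ π.1) : π.minPart ≤ p :=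
  Nat.sInf_le hp

end OP

open Finset OP

section MinPart

variable {t s : ℕ} {π : OP}

theorem inG_and_minPart_eq_iff :
    InG t π ∧ π.minPart = s ↔ π.IsValidIn (Icc s (s + t)) (Ico s (s + t)) ∧ s ∈ π.1 := by
  constructor
  · rintro ⟨⟨hv, hne, hdiff, hover⟩, rfl⟩
    have hmax : ∀ p ∈ π.1, p ≤ π.minPart + t := fun p hp =>
      (Multiset.le_sup hp).trans (show π.maxPart ≤ _ by omega)
    refine ⟨⟨hv, fun p hp => mem_Icc.2 ⟨minPart_le hp, hmax p hp⟩, fun p hp => ?_⟩,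
      minPart_mem hne⟩
    have hp1 := hv.2 p hp
    refine mem_Ico.2 ⟨minPart_le hp1, (hmax p hp1).lt_of_ne ?_⟩
    rintro rfl
    have hle : π.minPart + t ≤ π.maxPart := Multiset.le_sup hp1
    exact hover (by omega) (by rwa [show π.maxPart = π.minPart + t by omega])
  · rintro ⟨⟨hv, hA, hB⟩, hs⟩
    have hmin : π.minPart = s :=
      le_antisymm (minPart_le hs) (le_csInf ⟨s, hs⟩ fun p hp => (mem_Icc.1 (hA p hp)).1)
    have hmax : π.maxPart ≤ s + t := Multiset.sup_le.2 fun p hp => (mem_Icc.1 (hA p hp)).2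
    refine ⟨⟨hv, fun h => by simp [h] at hs, by omega, fun heq hover => ?_⟩, hmin⟩
    have := mem_Ico.1 (hB _ hover)
    omega

theorem isValidIn_Icc_Ico_and_notMem_iff :
    π.IsValidIn (Icc s (s + t)) (Ico s (s + t)) ∧ s ∉ π.1 ↔
      π.IsValidIn (Ioc s (s + t)) (Ioo s (s + t)) := by
  constructor
  · rintro ⟨⟨hv, hA, hB⟩, hs⟩
    have hne : ∀ p ∈ π.1, p ≠ s := fun p hp h => hs (h ▸ hp)
    refine ⟨hv, fun p hp => ?_, fun p hp => ?_⟩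
    · have := mem_Icc.1 (hA p hp); have := hne p hp
      exact mem_Ioc.2 ⟨by omega, by omega⟩
    · have := mem_Ico.1 (hB p hp); have := hne p (hv.2 p hp)
      exact mem_Ioo.2 ⟨by omega, by omega⟩
  · rintro ⟨hv, hA, hB⟩
    exact ⟨⟨hv, fun p hp => Ioc_subset_Icc_self (hA p hp),
      fun p hp => Ioo_subset_Ico_self (hB p hp)⟩, fun hs => by simpa using hA s hs⟩

theorem genFun_inG_le_minPart_sub :
    genFun (fun π => InG t π ∧ s ≤ π.minPart) - genFun (fun π => InG t π ∧ s + 1 ≤ π.minPart) =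
      genFun (IsValidIn (Icc s (s + t)) (Ico s (s + t))) -
        genFun (IsValidIn (Ioc s (s + t)) (Ioo s (s + t))) := by
  have hG : genFun (fun π => InG t π ∧ s ≤ π.minPart) =
      genFun (fun π => InG t π ∧ π.minPart = s) +
        genFun (fun π => InG t π ∧ s + 1 ≤ π.minPart) :=
    genFun_eq_add (fun π hπ => hπ.1.1)
      (fun π => by
        rw [← and_or_left]
        exact and_congr_right' ⟨fun _ => by omega, fun _ => by omega⟩)
      fun π h₁ h₂ => by omega
  have hO : genFun (IsValidIn (Icc s (s + t)) (Ico s (s + t))) =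
      genFun (fun π => InG t π ∧ π.minPart = s) +
        genFun (IsValidIn (Ioc s (s + t)) (Ioo s (s + t))) :=
    genFun_eq_add (fun π hπ => hπ.1)
      (fun π => by rw [inG_and_minPart_eq_iff, ← isValidIn_Icc_Ico_and_notMem_iff]; tauto)
      fun π h₁ h₂ => (isValidIn_Icc_Ico_and_notMem_iff.2 h₂).2 (inG_and_minPart_eq_iff.1 h₁).2
  rw [hG, hO]
  ring

theorem coeff_genFun_inG_le_minPart {n : ℕ} (hn : n < s) :
    coeff n (genFun fun π => InG t π ∧ s ≤ π.minPart) = 0 := by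
  have : IsEmpty {π : OP // (InG t π ∧ s ≤ π.minPart) ∧ π.wt = n} := by
    refine ⟨fun ⟨π, ⟨hG, hs⟩, hwt⟩ => ?_⟩
    have : π.minPart ≤ n := hwt ▸ Multiset.le_sum_of_mem (minPart_mem hG.2.1)
    omega
  simp [genFun]

end MinPart

section Telescoping

variable {t : ℕ}

theorem one_sub_X_pow_mul_sub_eq (ht : 0 < t) {s : ℕ} (hs : 0 < s) :
    (1 - X ^ t) * (genFun (IsValidIn (Icc s (s + t)) (Ico s (s + t))) -
        genFun (IsValidIn (Ioc s (s + t)) (Ioo s (s + t)))) =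
      genFun (IsValidIn (Ico s (s + t)) (Ico s (s + t))) -
        genFun (IsValidIn (Ico (s + 1) (s + 1 + t)) (Ico (s + 1) (s + 1 + t))) := by
  have hst : s < s + t := by omega
  have h0 : ∀ {I : Finset ℕ}, I ⊆ Icc s (s + t) → 0 ∉ I := fun hI h => by
    have := mem_Icc.1 (hI h); omega
  rw [genFun_isValidIn (h0 subset_rfl) Ico_subset_Icc_self,
    genFun_isValidIn (h0 Ioc_subset_Icc_self) Ioo_subset_Ioc_self,
    genFun_isValidIn (h0 Ico_subset_Icc_self) subset_rfl,
    add_right_comm, Ico_add_one_add_one_eq_Ioc,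
    genFun_isValidIn (h0 Ioc_subset_Icc_self) subset_rfl,
    ← Ioc_insert_left hst.le, ← Ioo_insert_right hst, ← Ioo_insert_left hst]
  have hs' : s ∉ insert (s + t) (Ioo s (s + t)) := by simp [ht.ne']
  simp only [prod_insert left_notMem_Ioo, prod_insert right_notMem_Ioo, prod_insert hs', pow_add]
  set x : ℚ⟦X⟧ := X ^ s
  set y : ℚ⟦X⟧ := X ^ t
  set P := ∏ j ∈ Ioo s (s + t), (1 + X ^ j : ℚ⟦X⟧)
  set Q := ∏ j ∈ Ioo s (s + t), (1 - X ^ j : ℚ⟦X⟧)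
  have hx : (1 - x) * (1 - x)⁻¹ = 1 :=
    PowerSeries.mul_inv_cancel _ (by simp [x, zero_pow hs.ne'])
  have hxy : (1 - x * y) * (1 - x * y)⁻¹ = 1 :=
    PowerSeries.mul_inv_cancel _ (by simp [x, y, zero_pow hs.ne'])
  simp only [PowerSeries.mul_inv_rev]
  -- Multiplied by `(1 - x) (1 - x y) Q`, both sides become `2 x (1 - y) P`.
  linear_combination (-(P * Q⁻¹ * y * (1 + x) * (1 - x * y)⁻¹)) * hx +
    (P * Q⁻¹ * (1 + x) * (1 - x)⁻¹) * hxy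

theorem one_sub_X_pow_mul_genFun_inG (ht : 0 < t) :
    (1 - X ^ t) * genFun (InG t) = genFun (IsValidIn (Ico 1 (1 + t)) (Ico 1 (1 + t))) - 1 := by
  set A : ℕ → ℚ⟦X⟧ := fun s => genFun (IsValidIn (Ico s (s + t)) (Ico s (s + t)))
  set G : ℕ → ℚ⟦X⟧ := fun s => genFun fun π => InG t π ∧ s ≤ π.minPart
  -- `G (n + 1)` and `A (n + 1) - 1` vanish to order `n + 1`, so this constant is `-1`.
  have hconst : ∀ s ≥ 1, (1 - X ^ t) * G s - A s = (1 - X ^ t) * G 1 - A 1 := by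
    refine Nat.le_induction rfl fun s hs ih => ?_
    rw [← ih]
    linear_combination (-(1 - X ^ t)) * genFun_inG_le_minPart_sub (t := t) (s := s) -
      one_sub_X_pow_mul_sub_eq ht hs
  have hG1 : G 1 = genFun (InG t) := congrArg genFun <| funext fun π =>
    propext ⟨And.left, fun h => ⟨h, h.1.1 _ (minPart_mem h.2.1)⟩⟩
  ext n
  have hGn : X ^ (n + 1) ∣ G (n + 1) :=
    X_pow_dvd_iff.2 fun m hm => coeff_genFun_inG_le_minPart hm
  have h := congrArg (coeff n) (hconst (n + 1) (by omega))
  rw [map_sub, map_sub, X_pow_dvd_iff.1 (dvd_mul_of_dvd_right hGn _) n (lt_add_one n),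
    coeff_genFun_isValidIn_of_lt _ fun a ha => (mem_Ico.1 ha).1, hG1] at h
  rw [map_sub]
  linear_combination -h

end Telescoping

theorem chern_gen_fun (t : ℕ) (ht : 0 < t) :
    (PowerSeries.mk fun n => (Nat.card {π : OP // InG t π ∧ π.wt = n} : ℚ)) =
      (1 - PowerSeries.X ^ t)⁻¹ *
        ((∏ k ∈ Finset.range t, (1 + PowerSeries.X ^ (k + 1) : PowerSeries ℚ)) *
          (∏ k ∈ Finset.range t, (1 - PowerSeries.X ^ (k + 1) : PowerSeries ℚ))⁻¹ - 1) := by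
  have hA : genFun (IsValidIn (Ico 1 (1 + t)) (Ico 1 (1 + t))) =
      (∏ k ∈ range t, (1 + X ^ (k + 1))) * (∏ k ∈ range t, (1 - X ^ (k + 1)))⁻¹ := by
    rw [genFun_isValidIn (by simp) subset_rfl, prod_Ico_eq_prod_range, prod_Ico_eq_prod_range,
      add_tsub_cancel_left]
    simp only [add_comm 1]
  have hunit : constantCoeff (1 - X ^ t : ℚ⟦X⟧) ≠ 0 := by simp [zero_pow ht.ne']
  change genFun (InG t) = _
  rw [← hA, mul_comm, eq_mul_inv_iff_mul_eq hunit, mul_comm, one_sub_X_pow_mul_genFun_inG ht]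
end

section
/- Fix a positive integer t. Let π be a nonempty overpartition in G_t and μ = φ(π) as above, with m(μ) the number of parts of μ equal to t. Then ℓ(π) ≥ ℓ(μ) − m(μ) + δ, where δ = 1 if ℓ(μ) = m(μ) and δ = 0 otherwise. -/
theorem len_ge_len_phi_sub (t : ℕ) (ht : 0 < t) (π : OP) (h : InG t π) :
    (phi t π).len - (phi t π).mT t +
      (if (phi t π).len = (phi t π).mT t then 1 else 0) ≤ π.len := by
  obtain ⟨hv, hne, -, -⟩ := h
  set F : Multiset ℕ := (π.1.map (· % t)).filter (· ≠ 0) with hF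
  set S : ℕ := (π.1.map (· / t)).sum with hS
  have hcountF : F.count t = 0 := by
    rw [Multiset.count_eq_zero]
    intro hmem
    rw [hF, Multiset.mem_filter, Multiset.mem_map] at hmem
    obtain ⟨⟨x, -, hx⟩, -⟩ := hmem
    have := Nat.mod_lt x ht
    omega
  have hmT : (phi t π).mT t = S := by
    simp only [OP.mT, phi, Multiset.count_add, Multiset.count_replicate, if_pos rfl,
      hcountF, ← hS, ← hF]; simp
  have hlen : (phi t π).len = S + Multiset.card F := by
    simp [OP.len, phi, ← hS, ← hF]
  have hcard : Multiset.card F ≤ π.len := by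
    calc Multiset.card F ≤ Multiset.card (π.1.map (· % t)) :=
          Multiset.card_le_card (Multiset.filter_le _ _)
      _ = π.len := by simp [OP.len]
  have hpos : 1 ≤ π.len := by
    simpa [OP.len, Nat.one_le_iff_ne_zero] using hne
  rw [hmT, hlen]
  by_cases hz : Multiset.card F = 0
  · simp [hz, hpos]
  · rw [if_neg (by omega)]
    omega
end

section
/- Fix a positive integer t and let μ be a nonempty overpartition with all parts at most t and no part equal to t overlined; let m(μ) be the number of parts equal to t. Under the map ψ (which merges the two components of a bipartition and un-overlines any overlined t), the number of pre-images of μ in B_t is 2m(μ) if all parts of μ equal t, and 2m(μ)+1 otherwise. -/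
theorem psi_preimage_count (t : ℕ) (ht : 0 < t) (μ : OP) (hμ : InP t μ) :
    Nat.card {b : Multiset ℕ × OP // InB t b ∧ psi t b = μ} =
      if ∀ p ∈ μ.1, p = t then 2 * μ.mT t else 2 * μ.mT t + 1 := by
  classical
  obtain ⟨⟨hpos, hov⟩, hne, hle, hnt⟩ := hμ
  set m := μ.1.count t with hm
  set N : ℕ := if ∀ p ∈ μ.1, p = t then m else m + 1 with hN
  set fA : ℕ → Multiset ℕ × OP := fun k =>
    (Multiset.replicate k t, (μ.1 - Multiset.replicate k t, μ.2)) with hfA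
  set fB : ℕ → Multiset ℕ × OP := fun k =>
    (Multiset.replicate k t, (μ.1 - Multiset.replicate k t, insert t μ.2)) with hfB
  set S : Finset (Multiset ℕ × OP) :=
    (Finset.range N).image fA ∪ (Finset.range m).image fB with hS
  -- auxiliary facts
  have hrep : ∀ k, k ≤ m → Multiset.replicate k t ≤ μ.1 := fun k hk =>
    Multiset.le_count_iff_replicate_le.mp hk
  have hadd : ∀ k, k ≤ m →
      Multiset.replicate k t + (μ.1 - Multiset.replicate k t) = μ.1 := fun k hk =>
    add_tsub_cancel_of_le (hrep k hk)
  have hcount : ∀ k, Multiset.count t (μ.1 - Multiset.replicate k t) = m - k := by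
    intro k
    rw [Multiset.count_sub, Multiset.count_replicate_self]
  have hcount' : ∀ p, p ≠ t → ∀ k,
      Multiset.count p (μ.1 - Multiset.replicate k t) = Multiset.count p μ.1 := by
    intro p hp k
    rw [Multiset.count_sub, Multiset.count_replicate, if_neg (Ne.symm hp), Nat.sub_zero]
  -- the preimage set equals ↑S
  have hset : {b : Multiset ℕ × OP | InB t b ∧ psi t b = μ} = (↑S : Set _) := by
    ext b
    simp only [Set.mem_setOf_eq, Finset.mem_coe, hS, Finset.mem_union, Finset.mem_image,
      Finset.mem_range]
    constructor
    · rintro ⟨⟨hα, ⟨hβpos, hβov⟩, hβne, hβle⟩, hpsi⟩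
      obtain ⟨α, γ, F⟩ := b
      have hsum : α + γ = μ.1 := congrArg Prod.fst hpsi
      have herase : F.erase t = μ.2 := congrArg Prod.snd hpsi
      have hαrep : α = Multiset.replicate (Multiset.card α) t :=
        Multiset.eq_replicate_card.mpr hα
      set k := Multiset.card α with hk
      have hγ : γ = μ.1 - Multiset.replicate k t := by
        rw [← hαrep, ← hsum, add_tsub_cancel_left]
      have hkm : k + Multiset.count t γ = m := by
        rw [hm, ← hsum, Multiset.count_add, hαrep, Multiset.count_replicate_self]
      have hkle : k ≤ m := hkm ▸ Nat.le_add_right k _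
      by_cases hF : t ∈ F
      · -- second family
        right
        refine ⟨k, ?_, ?_⟩
        · have : t ∈ γ := hβov t hF
          have : 0 < Multiset.count t γ := Multiset.count_pos.mpr this
          omega
        · have hFeq : F = insert t μ.2 := by
            rw [← herase, Finset.insert_erase hF]
          simp only [hfB, hαrep, hγ, hFeq]
      · left
        refine ⟨k, ?_, ?_⟩
        · rw [hN]
          split_ifs with hall
          · -- all parts equal t: need k < m
            have hcard : Multiset.count t μ.1 = Multiset.card μ.1 :=
              Multiset.count_eq_card.mpr (fun x hx => (hall x hx).symm)
            have hcards : k + Multiset.card γ = Multiset.card μ.1 := by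
              rw [← hsum, Multiset.card_add, hαrep, Multiset.card_replicate]
            have : 0 < Multiset.card γ := Multiset.card_pos.mpr hβne
            omega
          · omega
        · have hFeq : F = μ.2 := by rw [← herase, Finset.erase_eq_of_notMem hF]
          simp only [hfA, hαrep, hγ, hFeq]
    · -- backward direction
      have hβpos : ∀ k, ∀ p ∈ μ.1 - Multiset.replicate k t, 0 < p := fun k p hp =>
        hpos p (Multiset.mem_of_le (Multiset.sub_le_self _ _) hp)
      have hβle : ∀ k, ∀ p ∈ μ.1 - Multiset.replicate k t, p ≤ t := fun k p hp =>
        hle p (Multiset.mem_of_le (Multiset.sub_le_self _ _) hp)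
      have hβov : ∀ k, ∀ p ∈ μ.2, p ∈ μ.1 - Multiset.replicate k t := by
        intro k p hp
        have hpt : p ≠ t := fun h => hnt (h ▸ hp)
        rw [← Multiset.count_pos, hcount' p hpt k, Multiset.count_pos]
        exact hov p hp
      rintro (⟨k, hkN, rfl⟩ | ⟨k, hkm, rfl⟩)
      · have hkle : k ≤ m := by
          rw [hN] at hkN; split_ifs at hkN <;> omega
        have hβne : μ.1 - Multiset.replicate k t ≠ 0 := by
          by_cases hall : ∀ p ∈ μ.1, p = t
          · have hkN' : k < m := by rw [hN, if_pos hall] at hkN; exact hkN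
            rw [← Multiset.card_pos]
            have hcard : Multiset.count t μ.1 = Multiset.card μ.1 :=
              Multiset.count_eq_card.mpr (fun x hx => (hall x hx).symm)
            have := congrArg Multiset.card (hadd k hkle)
            rw [Multiset.card_add, Multiset.card_replicate] at this
            omega
          · push_neg at hall
            obtain ⟨p, hp, hpt⟩ := hall
            have : p ∈ μ.1 - Multiset.replicate k t := by
              rw [← Multiset.count_pos, hcount' p hpt k, Multiset.count_pos]
              exact hp
            exact fun h => Multiset.notMem_zero p (h ▸ this)
        refine ⟨⟨fun a ha => Multiset.eq_of_mem_replicate ha,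
          ⟨hβpos k, hβov k⟩, hβne, hβle k⟩, ?_⟩
        show (Multiset.replicate k t + (μ.1 - Multiset.replicate k t), μ.2.erase t) = μ
        rw [hadd k hkle, Finset.erase_eq_of_notMem hnt]
      · have hkle : k ≤ m := Nat.le_of_lt hkm
        have htγ : t ∈ μ.1 - Multiset.replicate k t := by
          rw [← Multiset.count_pos, hcount k]; omega
        refine ⟨⟨fun a ha => Multiset.eq_of_mem_replicate ha,
          ⟨hβpos k, ?_⟩, fun h => Multiset.notMem_zero t (h ▸ htγ), hβle k⟩, ?_⟩
        · intro p hp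
          rcases Finset.mem_insert.mp hp with rfl | hp
          · exact htγ
          · exact hβov k p hp
        · show (Multiset.replicate k t + (μ.1 - Multiset.replicate k t),
              (insert t μ.2).erase t) = μ
          rw [hadd k hkle, Finset.erase_insert hnt]
  -- compute cardinality
  have hcardS : S.card = N + m := by
    rw [hS, Finset.card_union_of_disjoint, Finset.card_image_of_injective,
      Finset.card_image_of_injective, Finset.card_range, Finset.card_range]
    · intro a b hab
      have := congrArg (fun x => Multiset.card x.1) hab
      simpa [hfB] using this
    · intro a b hab
      have := congrArg (fun x => Multiset.card x.1) hab
      simpa [hfA] using this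
    · rw [Finset.disjoint_left]
      rintro x hx hx'
      simp only [Finset.mem_image, Finset.mem_range] at hx hx'
      obtain ⟨a, _, rfl⟩ := hx
      obtain ⟨b, _, hb⟩ := hx'
      have := congrArg (fun x => x.2.2) hb
      simp only [hfA, hfB] at this
      exact hnt (this ▸ Finset.mem_insert_self t μ.2)
  have : Nat.card {b : Multiset ℕ × OP // InB t b ∧ psi t b = μ}
      = ({b : Multiset ℕ × OP | InB t b ∧ psi t b = μ} : Set _).ncard :=
    Nat.card_coe_set_eq _
  rw [this, hset, Set.ncard_coe_finset, hcardS, hN, OP.mT, ← hm]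
  split_ifs <;> omega
end

section
/- For every positive integer t, ∑_{r≥1} q^r · (q;q)_{r−1}(−zq;q)_{r+t−1} / ((q;q)_{r+t}(−zq;q)_r) = (1/((1+z)(1−q^t))) · ((−zq;q)_t/(q;q)_t − 1), as an identity of formal power series in z and q. -/
/-- The variable `z` in the two-variable formal power series ring. -/
noncomputable def Z : MvPowerSeries (Fin 2) ℚ := MvPowerSeries.X 0

/-- The variable `q` in the two-variable formal power series ring. -/
noncomputable def Q : MvPowerSeries (Fin 2) ℚ := MvPowerSeries.X 1

/-- The exponent vector of the monomial `z^m * q^n`. -/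
noncomputable def d2 (m n : ℕ) : Fin 2 →₀ ℕ := Finsupp.single 0 m + Finsupp.single 1 n

/-!
Put `F r = (q;q)_r (-zq;q)_{r+t} / ((q;q)_{r+t} (-zq;q)_r)`. Multiplied by `(1+z)(1-q^t)`, the
summand of index `r + 1` becomes `F r - F (r+1)`, because
`(1 - q^{r+t+1})(1 + z q^{r+1}) - (1 - q^{r+1})(1 + z q^{r+t+1}) = (1+z)(1-q^t) q^{r+1}`.
The partial sums therefore telescope to `(F 0 - F n) / ((1+z)(1-q^t))`, where
`F 0 = (-zq;q)_t / (q;q)_t` and `F n ≡ 1 mod q^{n+1}`. As the summand of index `r + 1` is a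
multiple of `q^{r+1}`, the coefficient of `z^a q^n` only sees the first `n` summands and the
constant `1` in place of `F n`.
-/

open MvPowerSeries Finset

section CommRing

variable {R : Type*} [CommRing R]

def qPochhammer (a q : R) (n : ℕ) : R := ∏ k ∈ range n, (1 - a * q ^ k)

variable (a q : R)

@[simp]
theorem qPochhammer_zero : qPochhammer a q 0 = 1 := prod_range_zero _

theorem qPochhammer_succ (n : ℕ) :
    qPochhammer a q (n + 1) = qPochhammer a q n * (1 - a * q ^ n) :=
  prod_range_succ _ n

theorem qPochhammer_add (m n : ℕ) :
    qPochhammer a q (m + n) = qPochhammer a q m * qPochhammer (a * q ^ m) q n := by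
  simp only [qPochhammer, prod_range_add, pow_add, mul_assoc]

theorem dvd_qPochhammer_sub_one (n : ℕ) : a ∣ qPochhammer a q n - 1 := by
  induction n with
  | zero => simp
  | succ n ih =>
    rw [qPochhammer_succ, show qPochhammer a q n * (1 - a * q ^ n) - 1 =
      (qPochhammer a q n - 1) * (1 - a * q ^ n) - a * q ^ n by ring]
    exact dvd_sub (dvd_mul_of_dvd_left ih _) (dvd_mul_right a _)

theorem prod_range_one_sub_pow_succ (n : ℕ) :
    ∏ k ∈ range n, (1 - q ^ (k + 1)) = qPochhammer q q n :=
  prod_congr rfl fun k _ => by ring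

theorem prod_range_one_add_mul_pow_succ (z : R) (n : ℕ) :
    ∏ k ∈ range n, (1 + z * q ^ (k + 1)) = qPochhammer (-(z * q)) q n :=
  prod_congr rfl fun k _ => by ring

end CommRing

namespace MvPowerSeries

theorem constantCoeff_qPochhammer {σ R : Type*} [CommRing R] {a : MvPowerSeries σ R}
    (ha : constantCoeff a = 0) (q : MvPowerSeries σ R) (n : ℕ) :
    constantCoeff (qPochhammer a q n) = 1 := by
  simp [qPochhammer, ha]

variable {σ k : Type*} [Field k] (q z : MvPowerSeries σ k)

theorem inv_eq_mul_inv_mul {x y : MvPowerSeries σ k} (hy : constantCoeff y ≠ 0) :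
    x⁻¹ = y * (x * y)⁻¹ := by
  rw [MvPowerSeries.mul_inv_rev, ← mul_assoc, MvPowerSeries.mul_inv_cancel _ hy, one_mul]

/-- The summand of index `r + 1` of the series. -/
noncomputable def qSeriesTerm (t r : ℕ) : MvPowerSeries σ k :=
  q ^ (r + 1) * qPochhammer q q r * qPochhammer (-(z * q)) q (r + t) *
    (qPochhammer q q (r + 1 + t))⁻¹ * (qPochhammer (-(z * q)) q (r + 1))⁻¹

noncomputable def pochhammerRatio (t r : ℕ) : MvPowerSeries σ k :=
  qPochhammer q q r * qPochhammer (-(z * q)) q (r + t) *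
    (qPochhammer q q (r + t) * qPochhammer (-(z * q)) q r)⁻¹

variable {q}

theorem pow_succ_dvd_qSeriesTerm (t r : ℕ) : q ^ (r + 1) ∣ qSeriesTerm q z t r := by
  simp only [qSeriesTerm, mul_assoc]
  exact dvd_mul_right _ _

theorem mul_qSeriesTerm (hq : constantCoeff q = 0) (t r : ℕ) :
    (1 + z) * (1 - q ^ t) * qSeriesTerm q z t r =
      pochhammerRatio q z t r - pochhammerRatio q z t (r + 1) := by
  unfold qSeriesTerm pochhammerRatio
  set b := -(z * q)
  have he : constantCoeff ((1 - q * q ^ (r + t)) * (1 - b * q ^ r)) ≠ 0 := by simp [b, hq]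
  have hden : (qPochhammer q q (r + t) * qPochhammer b q r)⁻¹ =
      (1 - q * q ^ (r + t)) * (1 - b * q ^ r) *
        (qPochhammer q q (r + 1 + t) * qPochhammer b q (r + 1))⁻¹ := by
    rw [add_right_comm, qPochhammer_succ, qPochhammer_succ, mul_mul_mul_comm]
    exact inv_eq_mul_inv_mul he
  have hnum : qPochhammer b q (r + 1 + t) = qPochhammer b q (r + t) * (1 - b * q ^ (r + t)) := by
    rw [add_right_comm, qPochhammer_succ]
  rw [hden, hnum, qPochhammer_succ q q r, MvPowerSeries.mul_inv_rev]
  ring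

theorem mul_sum_range_qSeriesTerm (hq : constantCoeff q = 0) (t n : ℕ) :
    (1 + z) * (1 - q ^ t) * ∑ r ∈ range n, qSeriesTerm q z t r =
      pochhammerRatio q z t 0 - pochhammerRatio q z t n := by
  simp only [mul_sum, mul_qSeriesTerm z hq]
  exact sum_range_sub' _ n

theorem pochhammerRatio_zero (t : ℕ) :
    pochhammerRatio q z t 0 = qPochhammer (-(z * q)) q t * (qPochhammer q q t)⁻¹ := by
  simp [pochhammerRatio]

theorem pow_succ_dvd_pochhammerRatio_sub_one (hq : constantCoeff q = 0) (t n : ℕ) :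
    q ^ (n + 1) ∣ pochhammerRatio q z t n - 1 := by
  set b := -(z * q)
  have hD : qPochhammer q q (n + t) * qPochhammer b q n *
      (qPochhammer q q (n + t) * qPochhammer b q n)⁻¹ = 1 :=
    MvPowerSeries.mul_inv_cancel _ (by simp [constantCoeff_qPochhammer, b, hq])
  have hb : q ^ (n + 1) ∣ qPochhammer (b * q ^ n) q t - 1 :=
    (Dvd.intro (-z) (by ring)).trans (dvd_qPochhammer_sub_one _ q t)
  have hq' : q ^ (n + 1) ∣ qPochhammer (q * q ^ n) q t - 1 :=
    pow_succ' q n ▸ dvd_qPochhammer_sub_one _ q t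
  have hnum : qPochhammer q q n * qPochhammer b q (n + t) -
      qPochhammer q q (n + t) * qPochhammer b q n =
        qPochhammer q q n * qPochhammer b q n *
          ((qPochhammer (b * q ^ n) q t - 1) - (qPochhammer (q * q ^ n) q t - 1)) := by
    rw [qPochhammer_add, qPochhammer_add]
    ring
  rw [pochhammerRatio, ← hD, ← sub_mul, hnum]
  exact dvd_mul_of_dvd_left (dvd_mul_of_dvd_right (dvd_sub hb hq') _) _

end MvPowerSeries

theorem coeff_d2_eq_zero_of_Q_pow_dvd {f : MvPowerSeries (Fin 2) ℚ} {a n m : ℕ}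
    (hf : Q ^ m ∣ f) (hnm : n < m) : coeff (d2 a n) f = 0 :=
  X_pow_dvd_iff.mp hf _ (by simpa [d2] using hnm)

theorem q_series_sum_identity (t : ℕ) (ht : 0 < t) (a n : ℕ) :
    (∑ᶠ r : ℕ, MvPowerSeries.coeff (d2 a n)
      (Q ^ (r + 1) * (∏ k ∈ Finset.range r, (1 - Q ^ (k + 1))) *
        (∏ k ∈ Finset.range (r + t), (1 + Z * Q ^ (k + 1))) *
        (∏ k ∈ Finset.range (r + 1 + t), (1 - Q ^ (k + 1)))⁻¹ *
        (∏ k ∈ Finset.range (r + 1), (1 + Z * Q ^ (k + 1)))⁻¹)) =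
    MvPowerSeries.coeff (d2 a n)
      (((1 + Z) * (1 - Q ^ t))⁻¹ *
        ((∏ k ∈ Finset.range t, (1 + Z * Q ^ (k + 1))) *
          (∏ k ∈ Finset.range t, (1 - Q ^ (k + 1)))⁻¹ - 1)) := by
  simp only [prod_range_one_sub_pow_succ, prod_range_one_add_mul_pow_succ, ← qSeriesTerm.eq_1,
    ← pochhammerRatio_zero]
  have hQ : constantCoeff Q = 0 := constantCoeff_X 1
  set c := (1 + Z) * (1 - Q ^ t)
  have hc : c⁻¹ * c = 1 := MvPowerSeries.inv_mul_cancel _ (by simp [c, Z, hQ, ht.ne'])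
  have hsupp : (Function.support fun r => coeff (d2 a n) (qSeriesTerm Q Z t r)) ⊆ range n := by
    intro r hr
    by_contra hrn
    exact hr (coeff_d2_eq_zero_of_Q_pow_dvd (pow_succ_dvd_qSeriesTerm Z t r) (by simp_all))
  have htail : coeff (d2 a n) (c⁻¹ * (pochhammerRatio Q Z t n - 1)) = 0 :=
    coeff_d2_eq_zero_of_Q_pow_dvd
      (dvd_mul_of_dvd_right (pow_succ_dvd_pochhammerRatio_sub_one Z hQ t n) _) n.lt_succ_self
  have hsum : ∑ r ∈ range n, qSeriesTerm Q Z t r =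
      c⁻¹ * (pochhammerRatio Q Z t 0 - pochhammerRatio Q Z t n) := by
    rw [← mul_sum_range_qSeriesTerm Z hQ, ← mul_assoc, hc, one_mul]
  rw [finsum_eq_sum_of_support_subset _ hsupp, ← map_sum, hsum,
    show ∀ x y, c⁻¹ * (x - y) = c⁻¹ * (x - 1) - c⁻¹ * (y - 1) from fun x y => by ring,
    map_sub, htail, sub_zero]
end

section
/- Fix a positive integer t. Let π be an overpartition in G_t with ℓ parts and μ = φ(π). Then the pair (k(π), s(π)) satisfies s(π)(ℓ − k(π)) + (s(π)+1)k(π) = m(μ), where m(μ) is the number of parts of μ equal to t, s(π) = ⌊(smallest part of π)/t⌋, and k(π) is the number of parts of π that are at least (s(π)+1)t. -/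
theorem k_s_equation (t : ℕ) (ht : 0 < t) (π : OP) (h : InG t π) :
    (π.minPart / t) *
        (π.len - Multiset.card (π.1.filter fun p => (π.minPart / t + 1) * t ≤ p)) +
      (π.minPart / t + 1) *
        Multiset.card (π.1.filter fun p => (π.minPart / t + 1) * t ≤ p) =
    (phi t π).mT t := by

  obtain ⟨hval, hne, hdiff, -⟩ := h
  set s := π.minPart / t with hs
  -- min is attained
  have hmem : π.minPart ∈ π.1 := by
    have : {p | p ∈ π.1}.Nonempty := by
      obtain ⟨a, ha⟩ := Multiset.exists_mem_of_ne_zero hne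
      exact ⟨a, ha⟩
    exact Nat.sInf_mem this
  have hmin : ∀ p ∈ π.1, π.minPart ≤ p := fun p hp => Nat.sInf_le hp
  have hmaxle : ∀ p ∈ π.1, p ≤ π.minPart + t := by
    intro p hp
    have h1 : p ≤ π.maxPart := Multiset.le_sup hp
    have h2 : π.minPart ≤ π.maxPart := Multiset.le_sup hmem
    omega
  -- key: value of p / t
  have hdiv : ∀ p ∈ π.1, p / t = if (s + 1) * t ≤ p then s + 1 else s := by
    intro p hp
    have hlow : s * t ≤ π.minPart := Nat.div_mul_le_self _ _
    have hhigh : π.minPart < (s + 1) * t := by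
      have h1 := Nat.div_add_mod π.minPart t
      have h2 := Nat.mod_lt π.minPart ht
      rw [← hs] at h1
      nlinarith
    by_cases hc : (s + 1) * t ≤ p
    · simp only [hc, if_true]
      have hub : p < (s + 2) * t := by
        have := hmaxle p hp; nlinarith
      have h1 : s + 1 ≤ p / t := (Nat.le_div_iff_mul_le ht).2 (by linarith)
      have h2 : p / t < s + 2 := (Nat.div_lt_iff_lt_mul ht).2 hub
      omega
    · simp only [hc, if_false]
      have h1 : s ≤ p / t := (Nat.le_div_iff_mul_le ht).2 (le_trans hlow (hmin p hp))
      have h2 : p / t < s + 1 := (Nat.div_lt_iff_lt_mul ht).2 (by omega)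
      omega
  -- compute count of t in phi
  have hcount : (phi t π).mT t = (π.1.map (· / t)).sum := by
    unfold OP.mT phi
    rw [Multiset.count_add, Multiset.count_replicate_self]
    have : Multiset.count t ((π.1.map (· % t)).filter (· ≠ 0)) = 0 := by
      rw [Multiset.count_eq_zero]
      intro hmem'
      rw [Multiset.mem_filter, Multiset.mem_map] at hmem'
      obtain ⟨⟨p, hp, hpt⟩, -⟩ := hmem'
      have := Nat.mod_lt p ht
      omega
    omega
  rw [hcount]
  -- split the multiset
  set P : ℕ → Prop := fun p => (s + 1) * t ≤ p with hP
  have hsplit := Multiset.filter_add_not P π.1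
  set A := π.1.filter P with hA
  set B := π.1.filter (fun p => ¬ P p) with hB
  have hsumA : (A.map (· / t)).sum = (s + 1) * Multiset.card A := by
    have hrep : A.map (· / t) = Multiset.replicate (Multiset.card A) (s + 1) := by
      rw [Multiset.eq_replicate, Multiset.card_map]
      refine ⟨rfl, ?_⟩
      intro x hx
      rw [Multiset.mem_map] at hx
      obtain ⟨p, hp, rfl⟩ := hx
      rw [hA, Multiset.mem_filter] at hp
      rw [hdiv p hp.1, if_pos hp.2]
    rw [hrep, Multiset.sum_replicate, smul_eq_mul, mul_comm]
  have hsumB : (B.map (· / t)).sum = s * Multiset.card B := by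
    have hrep : B.map (· / t) = Multiset.replicate (Multiset.card B) s := by
      rw [Multiset.eq_replicate, Multiset.card_map]
      refine ⟨rfl, ?_⟩
      intro x hx
      rw [Multiset.mem_map] at hx
      obtain ⟨p, hp, rfl⟩ := hx
      rw [hB, Multiset.mem_filter] at hp
      rw [hdiv p hp.1, if_neg hp.2]
    rw [hrep, Multiset.sum_replicate, smul_eq_mul, mul_comm]
  have hcard : Multiset.card A + Multiset.card B = π.len := by
    rw [OP.len, ← hsplit, Multiset.card_add]
  have hsum : (π.1.map (· / t)).sum = (A.map (· / t)).sum + (B.map (· / t)).sum := by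
    conv_lhs => rw [← hsplit]
    rw [Multiset.map_add, Multiset.sum_add]
  rw [hsum, hsumA, hsumB]
  have : π.len - Multiset.card A = Multiset.card B := by omega
  rw [this]
  ring
end
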